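/- arXiv:hep-th/0411277 — 2 statements merged into one kernel-verified Lean document; each statement's English description precedes it below -/
import Mathlib

section
/- For Re(α) > -1 and z in the cut plane ℂ \ [1,∞), the polylogarithm satisfies Li_α(z) = (z/Γ(α+1)) ∫_1^∞ (log s)^α/(s - z)² ds. -/
/-!
Substituting `s = eᵗ` turns the integral into the Mellin transform at `α + 1` of
`eᵗ / (eᵗ - z)²`. For `‖z‖ < 1` this kernel expands as `∑ (k + 1) zᵏ e^{-(k+1)t}`, and
transforming termwise gives `Γ(α + 1) ∑ (k + 1) zᵏ / (k + 1)^{α+1} = Γ(α + 1) Li_α(z) / z`.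
Holomorphy on the cut plane comes from differentiating under the integral sign: for `z` near a
point off `[1, ∞)` one has `‖eᵗ - z‖ ≥ c eᵗ`, so the integrand is dominated by `t^{Re α} e^{-t}`.
-/

open MeasureTheory Set

theorem integral_Ioi_one_eq_integral_exp_smul {E : Type*} [NormedAddCommGroup E]
    [NormedSpace ℝ E] (g : ℝ → E) :
    ∫ s in Ioi (1 : ℝ), g s = ∫ t in Ioi (0 : ℝ), Real.exp t • g (Real.exp t) := by
  rw [← Real.exp_zero, ← Real.image_exp_Ioi, integral_image_eq_integral_abs_deriv_smul
    measurableSet_Ioi (fun t _ => (Real.hasDerivAt_exp t).hasDerivWithinAt)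
    Real.exp_injective.injOn g]
  simp_rw [abs_of_pos (Real.exp_pos _)]

theorem integral_log_cpow_div_sub_sq_eq_mellin (α z : ℂ) :
    ∫ s in Ioi (1 : ℝ), (Real.log s : ℂ) ^ α / ((s : ℂ) - z) ^ 2 =
      mellin (fun t : ℝ => (Real.exp t : ℂ) / ((Real.exp t : ℂ) - z) ^ 2) (α + 1) := by
  rw [integral_Ioi_one_eq_integral_exp_smul, mellin, add_sub_cancel_right]
  refine setIntegral_congr_fun measurableSet_Ioi fun t _ => ?_
  simp only [Real.log_exp, Complex.real_smul, smul_eq_mul]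
  ring

theorem hasSum_succ_mul_pow_mul_exp {z : ℂ} {t : ℝ} (hz : ‖z‖ < Real.exp t) :
    HasSum (fun k : ℕ => ((k : ℂ) + 1) * z ^ k * Real.exp (-((k : ℝ) + 1) * t))
      ((Real.exp t : ℂ) / ((Real.exp t : ℂ) - z) ^ 2) := by
  set q : ℂ := z * Real.exp (-t) with hq_def
  have hq : ‖q‖ < 1 := by
    rw [norm_mul, Complex.norm_real, Real.norm_of_nonneg (Real.exp_nonneg _), Real.exp_neg,
      ← div_eq_mul_inv, div_lt_one (Real.exp_pos t)]
    exact hz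
  have hEz : (Real.exp t : ℂ) - z ≠ 0 := by
    rintro h
    rw [← sub_eq_zero.mp h, Complex.norm_real, Real.norm_of_nonneg (Real.exp_nonneg _)] at hz
    exact lt_irrefl _ hz
  have hterm (k : ℕ) : ((k : ℂ) + 1) * z ^ k * Real.exp (-((k : ℝ) + 1) * t) =
      Real.exp (-t) * (((k + 1).choose 1 : ℕ) * q ^ k) := by
    rw [show -((k : ℝ) + 1) * t = ((k + 1 : ℕ) : ℝ) * (-t) by push_cast; ring, Real.exp_nat_mul,
      Nat.choose_one_right, hq_def]
    push_cast
    ring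
  have hsum : (Real.exp t : ℂ) / ((Real.exp t : ℂ) - z) ^ 2 =
      Real.exp (-t) * (1 / (1 - q) ^ (1 + 1)) := by
    rw [hq_def, Real.exp_neg, Complex.ofReal_inv, one_add_one_eq_two]
    have hE : (Real.exp t : ℂ) ≠ 0 := Complex.ofReal_ne_zero.mpr (Real.exp_pos t).ne'
    field_simp
  rw [funext hterm, hsum]
  exact (hasSum_choose_mul_geometric_of_norm_lt_one 1 hq).mul_left _

theorem hasSum_mellin_exp_div_sub_sq {s z : ℂ} (hs : 0 < s.re) (hz : ‖z‖ < 1) :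
    HasSum (fun k : ℕ => Complex.Gamma s * (((k : ℂ) + 1) * z ^ k) / (((k : ℝ) + 1 : ℝ) : ℂ) ^ s)
      (mellin (fun t : ℝ => (Real.exp t : ℂ) / ((Real.exp t : ℂ) - z) ^ 2) s) := by
  have hsum : Summable fun k : ℕ => ((k : ℝ) + 1) * ‖z‖ ^ k := by
    have := (hasSum_choose_mul_geometric_of_norm_lt_one 1 (r := ‖z‖) (by rwa [norm_norm])).summable
    simpa only [Nat.choose_one_right, Nat.cast_add, Nat.cast_one] using this
  refine hasSum_mellin (a := fun k : ℕ => ((k : ℂ) + 1) * z ^ k) (p := fun k : ℕ => (k : ℝ) + 1)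
    (fun k => Or.inr (by positivity)) hs
    (fun t ht => hasSum_succ_mul_pow_mul_exp (hz.trans (Real.one_lt_exp_iff.mpr ht)))
    (hsum.of_nonneg_of_le (fun k => by positivity) fun k => ?_)
  have hk : ‖(k : ℂ) + 1‖ = (k : ℝ) + 1 := by exact_mod_cast Complex.norm_natCast (k + 1)
  rw [norm_mul, norm_pow, hk]
  exact div_le_self (by positivity) (Real.one_le_rpow (by simp) hs.le)

theorem hasSum_polylog_integral {α z : ℂ} (hα : -1 < α.re) (hz : ‖z‖ < 1) :
    HasSum (fun k : ℕ => z ^ (k + 1) / ((k + 1 : ℕ) : ℂ) ^ α)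
      (z / Complex.Gamma (α + 1) *
        ∫ s in Ioi (1 : ℝ), (Real.log s : ℂ) ^ α / ((s : ℂ) - z) ^ 2) := by
  have hs : 0 < (α + 1).re := by rw [Complex.add_re, Complex.one_re]; linarith
  have hΓ : Complex.Gamma (α + 1) ≠ 0 := Complex.Gamma_ne_zero_of_re_pos hs
  rw [integral_log_cpow_div_sub_sq_eq_mellin]
  have hterm (k : ℕ) : z / Complex.Gamma (α + 1) *
      (Complex.Gamma (α + 1) * (((k : ℂ) + 1) * z ^ k) / (((k : ℝ) + 1 : ℝ) : ℂ) ^ (α + 1)) =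
        z ^ (k + 1) / ((k + 1 : ℕ) : ℂ) ^ α := by
    have hk : (k : ℂ) + 1 ≠ 0 := Nat.cast_add_one_ne_zero k
    have hkα : ((k : ℂ) + 1) ^ α ≠ 0 := by simp [Complex.cpow_eq_zero_iff, hk]
    push_cast
    rw [Complex.cpow_add _ _ hk, Complex.cpow_one]
    field_simp
    ring
  simpa only [hterm] using (hasSum_mellin_exp_div_sub_sq hs hz).mul_left (z / Complex.Gamma (α + 1))

/- `‖x - z₀‖ = x ‖1 - x⁻¹ z₀‖`, and `‖1 - u z₀‖` has a positive minimum over `u ∈ [0, 1]`: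
a zero `u z₀ = 1` would put `z₀ = u⁻¹` on the ray `[1, ∞)`. -/
theorem exists_mul_le_norm_ofReal_sub {z₀ : ℂ} (hz₀ : z₀ ∉ Complex.ofReal '' Ici 1) :
    ∃ c > 0, ∀ x : ℝ, 1 ≤ x → c * x ≤ ‖(x : ℂ) - z₀‖ := by
  obtain ⟨u₀, hu₀, hmin⟩ := isCompact_Icc.exists_isMinOn (nonempty_Icc.mpr zero_le_one)
    (continuous_const.sub (Complex.continuous_ofReal.mul continuous_const)).norm.continuousOn
    (f := fun u : ℝ => ‖1 - (u : ℂ) * z₀‖)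
  refine ⟨‖1 - (u₀ : ℂ) * z₀‖, norm_pos_iff.mpr fun h => hz₀ ?_, fun x hx => ?_⟩
  · have hu₀z₀ : (u₀ : ℂ) * z₀ = 1 := (sub_eq_zero.mp h).symm
    have hu₀ne : u₀ ≠ 0 := by rintro rfl; simp at hu₀z₀
    refine ⟨u₀⁻¹, one_le_inv₀ (lt_of_le_of_ne hu₀.1 (Ne.symm hu₀ne)) |>.mpr hu₀.2, ?_⟩
    rw [Complex.ofReal_inv, inv_eq_of_mul_eq_one_right hu₀z₀]
  · have hx₀ : 0 < x := zero_lt_one.trans_le hx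
    have hxu : x⁻¹ ∈ Icc (0 : ℝ) 1 := ⟨inv_nonneg.mpr hx₀.le, inv_le_one_of_one_le₀ hx⟩
    calc ‖1 - (u₀ : ℂ) * z₀‖ * x ≤ ‖1 - ((x⁻¹ : ℝ) : ℂ) * z₀‖ * x := by
          gcongr; exact hmin hxu
      _ = ‖(x : ℂ) * (1 - ((x⁻¹ : ℝ) : ℂ) * z₀)‖ := by
          rw [norm_mul, Complex.norm_real, Real.norm_of_nonneg hx₀.le, mul_comm]
      _ = ‖(x : ℂ) - z₀‖ := by
          have : (x : ℂ) ≠ 0 := by exact_mod_cast hx₀.ne'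
          push_cast
          field_simp

theorem exists_mul_le_norm_ofReal_sub_of_mem_ball {z₀ : ℂ} (hz₀ : z₀ ∉ Complex.ofReal '' Ici 1) :
    ∃ c > 0, ∀ z ∈ Metric.ball z₀ c, ∀ x : ℝ, 1 ≤ x → c * x ≤ ‖(x : ℂ) - z‖ := by
  obtain ⟨c, hc, hbound⟩ := exists_mul_le_norm_ofReal_sub hz₀
  refine ⟨c / 2, half_pos hc, fun z hz x hx => ?_⟩
  have hzz₀ : ‖z - z₀‖ < c / 2 := mem_ball_iff_norm.mp hz
  calc c / 2 * x ≤ c * x - c / 2 := by nlinarith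
    _ ≤ ‖(x : ℂ) - z₀‖ - ‖z - z₀‖ := by linarith [hbound x hx]
    _ ≤ ‖(x : ℂ) - z‖ := by
        linarith [norm_sub_le_norm_sub_add_norm_sub (x : ℂ) z z₀]

theorem norm_ofReal_div_sub_pow_le {c x : ℝ} {z : ℂ} (hc : 0 < c) (hx : 1 ≤ x)
    (h : c * x ≤ ‖(x : ℂ) - z‖) (n : ℕ) :
    ‖(x : ℂ) / ((x : ℂ) - z) ^ (n + 2)‖ ≤ (c ^ (n + 2))⁻¹ * x⁻¹ := by
  have hx₀ : 0 < x := zero_lt_one.trans_le hx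
  rw [norm_div, norm_pow, Complex.norm_real, Real.norm_of_nonneg hx₀.le]
  calc x / ‖(x : ℂ) - z‖ ^ (n + 2) ≤ x / (c * x) ^ (n + 2) := by gcongr
    _ = (c ^ (n + 2))⁻¹ * x⁻¹ * (x ^ n)⁻¹ := by field_simp; ring
    _ ≤ (c ^ (n + 2))⁻¹ * x⁻¹ := by
        have : (x ^ n)⁻¹ ≤ 1 := inv_le_one_of_one_le₀ (one_le_pow₀ hx)
        have : 0 ≤ (c ^ (n + 2))⁻¹ * x⁻¹ := by positivity
        nlinarith

theorem hasDerivAt_div_sub_sq {𝕜 : Type*} [NontriviallyNormedField 𝕜] (a w z : 𝕜) (h : w ≠ z) :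
    HasDerivAt (fun z => a / (w - z) ^ 2) (2 * a / (w - z) ^ 3) z := by
  have h' : w - z ≠ 0 := sub_ne_zero.mpr h
  refine ((hasDerivAt_const z a).fun_div ((hasDerivAt_id' z).const_sub w |>.fun_pow 2)
    (pow_ne_zero 2 h')).congr_deriv ?_
  field_simp
  ring

theorem integrableOn_norm_cpow_mul_exp_neg {s : ℂ} (hs : 0 < s.re) :
    IntegrableOn (fun t : ℝ => ‖(t : ℂ) ^ (s - 1)‖ * Real.exp (-t)) (Ioi 0) := by
  refine (integrableOn_rpow_mul_exp_neg_rpow (s := s.re - 1) (by linarith) one_pos).congr_fun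
    (fun t ht => ?_) measurableSet_Ioi
  dsimp only
  rw [Complex.norm_cpow_eq_rpow_re_of_pos ht, Complex.sub_re, Complex.one_re, Real.rpow_one]

theorem differentiableAt_mellin_exp_div_sub_sq {s : ℂ} (hs : 0 < s.re) {z₀ : ℂ}
    (hz₀ : z₀ ∉ Complex.ofReal '' Ici 1) :
    DifferentiableAt ℂ
      (fun z => mellin (fun t : ℝ => (Real.exp t : ℂ) / ((Real.exp t : ℂ) - z) ^ 2) s) z₀ := by
  obtain ⟨c, hc, hsep⟩ := exists_mul_le_norm_ofReal_sub_of_mem_ball hz₀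
  have hdom : ∀ z ∈ Metric.ball z₀ c, ∀ t ∈ Ioi (0 : ℝ), ∀ n : ℕ,
      ‖(t : ℂ) ^ (s - 1) • ((Real.exp t : ℂ) / ((Real.exp t : ℂ) - z) ^ (n + 2))‖ ≤
        (c ^ (n + 2))⁻¹ * (‖(t : ℂ) ^ (s - 1)‖ * Real.exp (-t)) := fun z hz t ht n => by
    have hE : 1 ≤ Real.exp t := Real.one_le_exp (le_of_lt ht)
    rw [norm_smul, Real.exp_neg, mul_left_comm]
    gcongr
    exact norm_ofReal_div_sub_pow_le hc hE (hsep z hz _ hE) n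
  have hne : ∀ z ∈ Metric.ball z₀ c, ∀ t ∈ Ioi (0 : ℝ), (Real.exp t : ℂ) ≠ z :=
    fun z hz t ht h => by
    have := hsep z hz (Real.exp t) (Real.one_le_exp ht.le)
    rw [h, sub_self, norm_zero] at this
    exact (mul_pos hc (Real.exp_pos t)).not_ge this
  have hmeas (z : ℂ) : AEStronglyMeasurable
      (fun t : ℝ => (t : ℂ) ^ (s - 1) • ((Real.exp t : ℂ) / ((Real.exp t : ℂ) - z) ^ 2))
      (volume.restrict (Ioi 0)) := by
    fun_prop
  have hmeas' (z : ℂ) : AEStronglyMeasurable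
      (fun t : ℝ => (t : ℂ) ^ (s - 1) • (2 * (Real.exp t : ℂ) / ((Real.exp t : ℂ) - z) ^ 3))
      (volume.restrict (Ioi 0)) := by
    fun_prop
  unfold mellin
  refine (hasDerivAt_integral_of_dominated_loc_of_deriv_le
    (F := fun (z : ℂ) (t : ℝ) =>
      (t : ℂ) ^ (s - 1) • ((Real.exp t : ℂ) / ((Real.exp t : ℂ) - z) ^ 2))
    (F' := fun (z : ℂ) (t : ℝ) =>
      (t : ℂ) ^ (s - 1) • (2 * (Real.exp t : ℂ) / ((Real.exp t : ℂ) - z) ^ 3))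
    (bound := fun (t : ℝ) => 2 * ((c ^ 3)⁻¹ * (‖(t : ℂ) ^ (s - 1)‖ * Real.exp (-t))))
    (Metric.ball_mem_nhds z₀ hc) (.of_forall hmeas) ?_ (hmeas' z₀) ?_
    (((integrableOn_norm_cpow_mul_exp_neg hs).const_mul _).const_mul 2) ?_).2.differentiableAt
  · exact Integrable.mono' ((integrableOn_norm_cpow_mul_exp_neg hs).const_mul (c ^ 2)⁻¹)
      (hmeas z₀) ((ae_restrict_iff' measurableSet_Ioi).mpr (.of_forall fun t ht =>
        hdom z₀ (Metric.mem_ball_self hc) t ht 0))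
  · refine (ae_restrict_iff' measurableSet_Ioi).mpr (.of_forall fun t ht z hz => ?_)
    rw [mul_div_assoc, smul_eq_mul, mul_left_comm, norm_mul, Complex.norm_two]
    exact mul_le_mul_of_nonneg_left (hdom z hz t ht 1) two_pos.le
  · refine (ae_restrict_iff' measurableSet_Ioi).mpr (.of_forall fun t ht z hz => ?_)
    exact (hasDerivAt_div_sub_sq _ _ _ (hne z hz t ht)).fun_const_smul _

/-- The function z ↦ (z/Γ(α+1)) ∫_1^∞ (log s)^α/(s-z)² ds is analytic on the
cut plane ℂ \ [1,∞) and agrees with the polylogarithm series on the unit disk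
(for Re α > -1): this is the analytic continuation of Li_α. -/
theorem stmt_12 (α : ℂ) (hα : -1 < α.re) :
    AnalyticOn ℂ
        (fun z : ℂ => z / Complex.Gamma (α + 1) *
          ∫ s in Set.Ioi (1 : ℝ),
            ((Real.log s : ℂ)) ^ α / ((s : ℂ) - z) ^ 2)
        ((Complex.ofReal '' Set.Ici (1 : ℝ))ᶜ) ∧
      ∀ z : ℂ, ‖z‖ < 1 →
        ∑' k : ℕ, z ^ (k + 1) / ((k + 1 : ℕ) : ℂ) ^ α =
          z / Complex.Gamma (α + 1) *
            ∫ s in Set.Ioi (1 : ℝ),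
              ((Real.log s : ℂ)) ^ α / ((s : ℂ) - z) ^ 2 := by
  refine ⟨?_, fun z hz => (hasSum_polylog_integral hα hz).tsum_eq⟩
  have hs : 0 < (α + 1).re := by rw [Complex.add_re, Complex.one_re]; linarith
  have hopen : IsOpen (Complex.ofReal '' Ici (1 : ℝ))ᶜ :=
    (Complex.isometry_ofReal.isClosedEmbedding.isClosedMap _ isClosed_Ici).isOpen_compl
  refine DifferentiableOn.analyticOn (fun z hz => ?_) hopen
  simp_rw [integral_log_cpow_div_sub_sq_eq_mellin]
  exact ((differentiableAt_id.div_const _).mul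
    (differentiableAt_mellin_exp_div_sub_sq hs hz)).differentiableWithinAt
end

section
/- For x > 0 and any α > 0, ∫_{e^x}^∞ (log y + x)^α/(y+1)² dy = ∑_{n=1}^∞ (-1)^{n-1} n^{-α} e^{nx} Γ(α+1, 2nx), where Γ(·,·) is the upper incomplete gamma function; consequently this integral is O(x^α e^{-x}) as x → ∞. -/
/-!
For `y > eˣ > 1` expand `1/(y+1)² = ∑ (-1)ⁿ (n+1) y^{-(n+2)}`. Since `y^{-n} ≤ e^{-nx}` on the
domain, the integral of the absolute value of the `n`-th term is at most `(n+1) e^{-nx}` times that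
of the first one, so the series may be integrated termwise. The substitution
`y = e^{t/c - x}` turns `∫ (log y + x)^α y^{-(c+1)} dy` into `c^{-(α+1)} e^{cx} Γ(α+1, 2cx)`.

For the bound, `1/(y+1)² ≤ y^{-2}` gives at most `eˣ Γ(α+1, 2x)`, and `Γ(α+1, z) ≤ 2 z^α e^{-z}`
once `z ≥ 2α`, because then `t^α ≤ z^α e^{(t-z)/2}` for `t ≥ z`.
-/

open Filter Asymptotics MeasureTheory Set Real

lemma hasSum_coe_add_one_mul_geometric {r : ℝ} (hr : ‖r‖ < 1) :
    HasSum (fun n : ℕ => ((n : ℝ) + 1) * r ^ n) (1 / (1 - r) ^ 2) := by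
  simpa using hasSum_choose_mul_geometric_of_norm_lt_one 1 hr

lemma hasSum_one_div_add_one_sq {y : ℝ} (hy : 1 < y) :
    HasSum (fun n : ℕ => (-1) ^ n * ((n : ℝ) + 1) / y ^ (n + 2)) (1 / (y + 1) ^ 2) := by
  have hy0 : 0 < y := by linarith
  have hr : ‖-y⁻¹‖ < 1 := by
    rw [norm_neg, norm_inv, Real.norm_of_nonneg hy0.le]
    exact inv_lt_one_of_one_lt₀ hy
  have hterm : ∀ n : ℕ, (-1) ^ n * ((n : ℝ) + 1) / y ^ (n + 2) =
      ((n : ℝ) + 1) * (-y⁻¹) ^ n / y ^ 2 := fun n => by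
    rw [neg_pow (y⁻¹), inv_pow, pow_add]
    field_simp
  have hsum : 1 / (y + 1) ^ 2 = 1 / (1 - -y⁻¹) ^ 2 / y ^ 2 := by
    rw [sub_neg_eq_add, div_div, ← mul_pow, add_mul, one_mul, inv_mul_cancel₀ hy0.ne']
  rw [funext hterm, hsum]
  exact (hasSum_coe_add_one_mul_geometric hr).div_const (y ^ 2)

lemma integrableOn_rpow_mul_exp_neg_Ioi {α z : ℝ} (hα : -1 < α) (hz : 0 ≤ z) :
    IntegrableOn (fun t : ℝ => t ^ α * exp (-t)) (Ioi z) := by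
  simpa using (integrableOn_rpow_mul_exp_neg_rpow hα one_pos).mono_set (Ioi_subset_Ioi hz)

lemma rpow_mul_exp_neg_le {α z t : ℝ} (hα : 0 ≤ α) (hz : 0 < z) (hαz : 2 * α ≤ z)
    (ht : z ≤ t) : t ^ α * exp (-t) ≤ z ^ α * exp (-z / 2) * exp (-(1 / 2) * t) := by
  have hratio : 0 < t / z := div_pos (hz.trans_le ht) hz
  have hlog : α * log (t / z) ≤ (t - z) / 2 := calc
    α * log (t / z) ≤ α * (t / z - 1) := by gcongr; exact log_le_sub_one_of_pos hratio
    _ = α / z * (t - z) := by field_simp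
    _ ≤ 1 / 2 * (t - z) :=
        mul_le_mul_of_nonneg_right (by rw [div_le_iff₀ hz]; linarith) (by linarith)
    _ = (t - z) / 2 := by ring
  calc t ^ α * exp (-t) = z ^ α * (t / z) ^ α * exp (-t) := by
        rw [← mul_rpow hz.le hratio.le, mul_div_cancel₀ t hz.ne']
    _ = z ^ α * (exp (α * log (t / z)) * exp (-t)) := by
        rw [rpow_def_of_pos hratio, mul_comm (log _)]; ring
    _ ≤ z ^ α * (exp ((t - z) / 2) * exp (-t)) := by gcongr
    _ = z ^ α * exp (-z / 2) * exp (-(1 / 2) * t) := by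
        rw [mul_assoc, ← exp_add, ← exp_add]; ring_nf

lemma integral_rpow_mul_exp_neg_Ioi_le {α z : ℝ} (hα : 0 ≤ α) (hz : 0 < z) (hαz : 2 * α ≤ z) :
    ∫ t in Ioi z, t ^ α * exp (-t) ≤ 2 * z ^ α * exp (-z) := by
  have hhalf : -(1 / 2 : ℝ) < 0 := by norm_num
  calc ∫ t in Ioi z, t ^ α * exp (-t)
      ≤ ∫ t in Ioi z, z ^ α * exp (-z / 2) * exp (-(1 / 2) * t) :=
        setIntegral_mono_on (integrableOn_rpow_mul_exp_neg_Ioi (by linarith) hz.le)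
          ((integrableOn_exp_mul_Ioi hhalf z).const_mul _) measurableSet_Ioi
          fun t ht => rpow_mul_exp_neg_le hα hz hαz (mem_Ioi.mp ht).le
    _ = 2 * z ^ α * exp (-z) := by
        rw [integral_const_mul, integral_exp_mul_Ioi hhalf]
        rw [show exp (-z) = exp (-z / 2) * exp (-(1 / 2) * z) by rw [← exp_add]; ring_nf]
        ring

lemma log_add_pos_of_exp_lt {x y : ℝ} (hx : 0 ≤ x) (hy : exp x < y) : 0 < log y + x := by
  have := (lt_log_iff_exp_lt ((exp_pos x).trans hy)).mpr hy
  linarith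

section Substitution

variable {α c x : ℝ}

lemma image_exp_div_sub_Ioi (hc : 0 < c) :
    (fun t => exp (t / c - x)) '' Ioi (2 * c * x) = Ioi (exp x) := by
  ext y
  constructor
  · rintro ⟨t, ht, rfl⟩
    rw [mem_Ioi, exp_lt_exp, lt_sub_iff_add_lt, lt_div_iff₀ hc]
    linarith [mem_Ioi.mp ht]
  · intro hy
    have hy0 : 0 < y := (exp_pos x).trans hy
    refine ⟨c * (log y + x), ?_, ?_⟩
    · have : x < log y := (lt_log_iff_exp_lt hy0).mpr hy
      rw [mem_Ioi]; nlinarith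
    · simp only
      rw [mul_div_cancel_left₀ _ hc.ne', add_sub_cancel_right, exp_log hy0]

lemma strictMono_exp_div_sub (hc : 0 < c) : StrictMono fun t => exp (t / c - x) :=
  exp_strictMono.comp fun a b hab => by gcongr

lemma abs_div_mul_log_exp_add_rpow_div_rpow (hc : 0 < c) {t : ℝ} (ht : 0 ≤ t) :
    |exp (t / c - x) / c| * ((log (exp (t / c - x)) + x) ^ α / exp (t / c - x) ^ (c + 1)) =
      c ^ (-(α + 1)) * exp (c * x) * (t ^ α * exp (-t)) := by
  rw [abs_of_pos (by positivity), log_exp, sub_add_cancel, div_rpow ht hc.le, ← exp_mul,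
    rpow_neg hc.le, rpow_add_one hc.ne']
  have : exp (t / c - x) / exp ((t / c - x) * (c + 1)) = exp (c * x) * exp (-t) := by
    rw [← exp_sub, ← exp_add]; congr 1; field_simp; ring
  calc exp (t / c - x) / c * (t ^ α / c ^ α / exp ((t / c - x) * (c + 1)))
      = (c ^ α * c)⁻¹ * (exp (t / c - x) / exp ((t / c - x) * (c + 1))) * t ^ α := by
        field_simp
    _ = (c ^ α * c)⁻¹ * exp (c * x) * (t ^ α * exp (-t)) := by rw [this]; ring

lemma hasDerivAt_exp_div_sub (t : ℝ) :
    HasDerivAt (fun t => exp (t / c - x)) (exp (t / c - x) / c) t := by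
  simpa [div_eq_mul_inv] using (((hasDerivAt_id t).div_const c).sub_const x).exp

lemma integral_log_add_rpow_div_rpow (hc : 0 < c) (hx : 0 ≤ x) (α : ℝ) :
    ∫ y in Ioi (exp x), (log y + x) ^ α / y ^ (c + 1) =
      c ^ (-(α + 1)) * exp (c * x) * ∫ t in Ioi (2 * c * x), t ^ α * exp (-t) := by
  rw [← image_exp_div_sub_Ioi hc, integral_image_eq_integral_abs_deriv_smul measurableSet_Ioi
    (fun t _ => (hasDerivAt_exp_div_sub t).hasDerivWithinAt)
    (strictMono_exp_div_sub hc).injective.injOn, ← integral_const_mul]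
  refine setIntegral_congr_fun measurableSet_Ioi fun t ht => ?_
  exact abs_div_mul_log_exp_add_rpow_div_rpow hc (by nlinarith [mem_Ioi.mp ht])

lemma integrableOn_log_add_rpow_div_rpow (hα : -1 < α) (hc : 0 < c) (hx : 0 ≤ x) :
    IntegrableOn (fun y => (log y + x) ^ α / y ^ (c + 1)) (Ioi (exp x)) := by
  rw [← image_exp_div_sub_Ioi hc, integrableOn_image_iff_integrableOn_abs_deriv_smul
    measurableSet_Ioi (fun t _ => (hasDerivAt_exp_div_sub t).hasDerivWithinAt)
    (strictMono_exp_div_sub hc).injective.injOn]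
  have hGamma : IntegrableOn (fun t => c ^ (-(α + 1)) * exp (c * x) * (t ^ α * exp (-t)))
      (Ioi (2 * c * x)) :=
    (integrableOn_rpow_mul_exp_neg_Ioi hα (by positivity)).const_mul _
  refine hGamma.congr_fun (fun t ht => ?_) measurableSet_Ioi
  exact (abs_div_mul_log_exp_add_rpow_div_rpow hc (by nlinarith [mem_Ioi.mp ht])).symm

end Substitution

lemma div_rpow_add_natCast_le {a c x y : ℝ} (ha : 0 ≤ a) (hy : exp x ≤ y) (n : ℕ) :
    a / y ^ (c + n) ≤ exp (-x) ^ n * (a / y ^ c) := by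
  have hy0 : 0 < y := (exp_pos x).trans_le hy
  have hyc : 0 ≤ a / y ^ c := div_nonneg ha (rpow_nonneg hy0.le c)
  rw [rpow_add_natCast hy0.ne', exp_neg, inv_pow, ← div_div, inv_mul_eq_div]
  exact div_le_div_of_nonneg_left hyc (by positivity) (pow_le_pow_left₀ (exp_pos x).le hy n)

lemma integral_log_add_rpow_div_add_one_sq_eq_tsum {α x : ℝ} (hα : -1 < α) (hx : 0 < x) :
    ∫ y in Ioi (exp x), (log y + x) ^ α / (y + 1) ^ 2 =
      ∑' n : ℕ, (-1 : ℝ) ^ n * ((n : ℝ) + 1) ^ (-α) * exp (((n : ℝ) + 1) * x) *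
        ∫ t in Ioi (2 * ((n : ℝ) + 1) * x), t ^ α * exp (-t) := by
  set F : ℕ → ℝ → ℝ := fun n y =>
    (-1) ^ n * ((n : ℝ) + 1) * ((log y + x) ^ α / y ^ ((n : ℝ) + 1 + 1))
  have hsum : ∀ y ∈ Ioi (exp x), HasSum (fun n => F n y) ((log y + x) ^ α / (y + 1) ^ 2) := by
    intro y hy
    have hpow : ∀ n : ℕ, y ^ ((n : ℝ) + 1 + 1) = y ^ (n + 2) := fun n => by
      rw [← rpow_natCast]; push_cast; ring_nf
    have h1y : 1 < y := (one_lt_exp_iff.mpr hx).trans hy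
    have hF : (fun n => F n y) =
        fun n : ℕ => (log y + x) ^ α * ((-1) ^ n * ((n : ℝ) + 1) / y ^ (n + 2)) :=
      funext fun n => by simp only [F, hpow]; ring
    rw [hF, ← mul_one_div]
    exact (hasSum_one_div_add_one_sq h1y).mul_left _
  have hint : ∀ n : ℕ, Integrable (F n) (volume.restrict (Ioi (exp x))) := fun n =>
    (integrableOn_log_add_rpow_div_rpow hα (by positivity) hx.le).const_mul _
  set J := ∫ y in Ioi (exp x), (log y + x) ^ α / y ^ ((1 : ℝ) + 1)
  have hnorm : ∀ n : ℕ, ∫ y in Ioi (exp x), ‖F n y‖ ≤ ((n : ℝ) + 1) * exp (-x) ^ n * J := by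
    intro n
    rw [← integral_const_mul]
    refine setIntegral_mono_on (hint n).norm
      ((integrableOn_log_add_rpow_div_rpow hα one_pos hx.le).const_mul _) measurableSet_Ioi
      fun y hy => ?_
    have hlog := rpow_nonneg (log_add_pos_of_exp_lt hx.le hy).le α
    have hdom := div_rpow_add_natCast_le (c := 1 + 1) hlog hy.le n
    rw [show (1 : ℝ) + 1 + n = n + 1 + 1 by ring] at hdom
    simp only [F, norm_mul, norm_pow, norm_neg, norm_one, one_pow, one_mul]
    have hy0 : 0 < y := (exp_pos x).trans hy
    rw [Real.norm_of_nonneg (by positivity),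
      Real.norm_of_nonneg (div_nonneg hlog (rpow_nonneg hy0.le _)), mul_assoc]
    gcongr
  have hsummable : Summable fun n : ℕ => ∫ y in Ioi (exp x), ‖F n y‖ :=
    Summable.of_nonneg_of_le (fun n => integral_nonneg fun _ => norm_nonneg _) hnorm
      ((hasSum_coe_add_one_mul_geometric (r := exp (-x)) (by
        rw [Real.norm_of_nonneg (exp_pos _).le, exp_lt_one_iff]; linarith)).summable.mul_right J)
  rw [setIntegral_congr_fun measurableSet_Ioi fun y hy => (hsum y hy).tsum_eq.symm,
    ← integral_tsum_of_summable_integral_norm hint hsummable]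
  congr 1 with n
  have hn : (0 : ℝ) < n + 1 := by positivity
  rw [integral_const_mul, integral_log_add_rpow_div_rpow hn hx.le, rpow_neg hn.le,
    rpow_neg hn.le, rpow_add_one hn.ne']
  field_simp

lemma integral_log_add_rpow_div_add_one_sq_le {α x : ℝ} (hα : 0 ≤ α) (hαx : α ≤ x)
    (hx : 0 < x) :
    ∫ y in Ioi (exp x), (log y + x) ^ α / (y + 1) ^ 2 ≤ 2 ^ (α + 1) * (x ^ α * exp (-x)) := by
  have hint := integrableOn_log_add_rpow_div_rpow (α := α) (by linarith) one_pos hx.le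
  have hle : ∀ y ∈ Ioi (exp x),
      (log y + x) ^ α / (y + 1) ^ 2 ≤ (log y + x) ^ α / y ^ ((1 : ℝ) + 1) := fun y hy => by
    have hy0 : 0 < y := (exp_pos x).trans hy
    rw [one_add_one_eq_two, rpow_two]
    gcongr
    · exact (rpow_pos_of_pos (log_add_pos_of_exp_lt hx.le hy) α).le
    · linarith
  have hmeas : Measurable fun y => (log y + x) ^ α / (y + 1) ^ 2 :=
    ((measurable_log.add_const x).pow_const α).div ((measurable_id.add_const 1).pow_const 2)
  calc ∫ y in Ioi (exp x), (log y + x) ^ α / (y + 1) ^ 2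
      ≤ ∫ y in Ioi (exp x), (log y + x) ^ α / y ^ ((1 : ℝ) + 1) := by
        refine setIntegral_mono_on (hint.mono' hmeas.aestronglyMeasurable ?_) hint
          measurableSet_Ioi hle
        refine (ae_restrict_iff' measurableSet_Ioi).mpr (ae_of_all _ fun y hy => ?_)
        rw [Real.norm_of_nonneg ?_]
        · exact hle y hy
        · exact div_nonneg (rpow_pos_of_pos (log_add_pos_of_exp_lt hx.le hy) α).le
            (by positivity)
    _ = exp x * ∫ t in Ioi (2 * x), t ^ α * exp (-t) := by
        rw [integral_log_add_rpow_div_rpow one_pos hx.le]; simp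
    _ ≤ exp x * (2 * (2 * x) ^ α * exp (-(2 * x))) := by
        gcongr
        exact integral_rpow_mul_exp_neg_Ioi_le hα (by positivity) (by linarith)
    _ = 2 ^ (α + 1) * (x ^ α * exp (-x)) := by
        rw [mul_rpow two_pos.le hx.le, rpow_add_one two_ne_zero,
          show exp (-(2 * x)) = exp (-x) * exp (-x) by rw [← exp_add]; ring_nf]
        have hexp : exp x * exp (-x) = 1 := by rw [← exp_add, add_neg_cancel, exp_zero]
        linear_combination (2 * 2 ^ α * x ^ α * exp (-x)) * hexp

lemma isBigO_integral_log_add_rpow_div_add_one_sq {α : ℝ} (hα : 0 ≤ α) :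
    (fun x => ∫ y in Ioi (exp x), (log y + x) ^ α / (y + 1) ^ 2) =O[atTop]
      fun x => x ^ α * exp (-x) := by
  refine IsBigO.of_bound (2 ^ (α + 1)) ?_
  filter_upwards [eventually_ge_atTop α, eventually_gt_atTop 0] with x hαx hx
  have hint_nonneg : 0 ≤ ∫ y in Ioi (exp x), (log y + x) ^ α / (y + 1) ^ 2 :=
    setIntegral_nonneg measurableSet_Ioi fun y hy =>
      div_nonneg (rpow_pos_of_pos (log_add_pos_of_exp_lt hx.le hy) α).le (by positivity)
  rw [Real.norm_of_nonneg hint_nonneg, Real.norm_of_nonneg (by positivity)]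
  exact integral_log_add_rpow_div_add_one_sq_le hα hαx hx

/-- Expansion of ∫_{e^x}^∞ (log y + x)^α/(y+1)² dy in terms of upper incomplete
gamma functions, and the resulting O(x^α e^{-x}) bound as x → ∞. -/
theorem stmt_16 (α : ℝ) (hα : 0 < α) :
    (∀ x : ℝ, 0 < x →
        (∫ y in Set.Ioi (Real.exp x), (Real.log y + x) ^ α / (y + 1) ^ 2) =
          ∑' n : ℕ, (-1 : ℝ) ^ n * ((n : ℝ) + 1) ^ (-α) *
            Real.exp (((n : ℝ) + 1) * x) *
            ∫ t in Set.Ioi (2 * ((n : ℝ) + 1) * x), t ^ α * Real.exp (-t)) ∧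
      (fun x : ℝ =>
          ∫ y in Set.Ioi (Real.exp x), (Real.log y + x) ^ α / (y + 1) ^ 2)
        =O[atTop] fun x : ℝ => x ^ α * Real.exp (-x) :=
  ⟨fun _ hx => integral_log_add_rpow_div_add_one_sq_eq_tsum (by linarith) hx,
    isBigO_integral_log_add_rpow_div_add_one_sq hα.le⟩
end
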